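/- (Multi-step simultaneous coverage.) Suppose trajectories Y^(1),...,Y^(n+1) of length T+1 are exchangeable. For each trajectory, a fixed measurable online rule produces, at each time t, intervals [ℓ_t^τ(Y), u_t^τ(Y)] for τ ∈ [H] forecasting times t+τ, depending only on (Y_0,...,Y_t) and fixed auxiliary data. Define ε_i as the multi-step conformity score (maximum over t ∈ [T] of the positive part of the distance from Y_t^(i) to the intersection of all intervals for time t issued at times t-τ, τ ∈ [H]), and Q̂ the ⌈(1-α)(n+1)⌉-th smallest of ε_1,...,ε_n. Then P( Y_{t+τ}^(n+1) ∈ [ℓ_t^τ(Y^(n+1)) - Q̂, u_t^τ(Y^(n+1)) + Q̂] for all t ∈ [T] and τ ∈ [H] with t+τ ≤ T ) ≥ 1-α. -/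

import Mathlib

open MeasureTheory

/-- The `k`-th smallest value (1-indexed) of a list of reals, as an extended real,
equal to `⊤` if `k` exceeds the length of the list. -/
noncomputable def kthSmallestE (l : List ℝ) (k : ℕ) : EReal :=
  ((l.insertionSort (· ≤ ·)).map (fun x : ℝ => (x : EReal))).getD (k - 1) ⊤

/-- The multi-step conformity score of a trajectory `y = (y_0, ..., y_T)`: the maximum,
over all target times `t + τ ≤ T` with `t ∈ [T]`, `τ ∈ [H]`, of the positive part of the
distance from `y_{t+τ}` to the τ-step-ahead interval `[L y t τ, U y t τ]` issued at time
`t`; equivalently, the max over target times of the positive-part distance to the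
intersection of all intervals issued for that time. -/
noncomputable def msScore (H T : ℕ) (L U : (Fin (T + 1) → ℝ) → ℕ → ℕ → ℝ)
    (y : Fin (T + 1) → ℝ) : ℝ :=
  ⨆ t ∈ Finset.Icc 1 T, ⨆ τ ∈ Finset.Icc 1 H, ⨆ _ : t + τ ≤ T,
    max (max (L y t τ - y ⟨min (t + τ) T, Nat.lt_succ_of_le (Nat.min_le_right _ _)⟩) 0)
        (max (y ⟨min (t + τ) T, Nat.lt_succ_of_le (Nat.min_le_right _ _)⟩ - U y t τ) 0)

/-! ### Auxiliary list/counting lemmas -/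

lemma countP_ofFn' {m : ℕ} (f : Fin m → ℝ) (p : ℝ → Prop) [DecidablePred p] :
    (List.ofFn f).countP (fun x => decide (p x)) = (Finset.univ.filter (fun i => p (f i))).card := by
  rw [List.ofFn_eq_map, List.countP_map, Fin.univ_def]
  simp [Finset.filter, Finset.card, Multiset.filter_coe, List.countP_eq_length_filter,
    Function.comp_def]

lemma sorted_le_count {l : List ℝ} (hl : l.Pairwise (· ≤ ·)) {j : ℕ} (hj : j < l.length)
    {q : ℝ} (hq : l[j] = q) :
    j + 1 ≤ l.countP (fun x => decide (x ≤ q)) := by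
  conv_rhs => rw [← List.take_append_drop (j+1) l]
  rw [List.countP_append]
  have h1 : (l.take (j+1)).countP (fun x => decide (x ≤ q)) = (l.take (j+1)).length := by
    rw [List.countP_eq_length]
    intro a ha
    obtain ⟨i, hi, rfl⟩ := List.mem_iff_getElem.1 ha
    rw [List.length_take] at hi
    rw [List.getElem_take]
    have := hl.rel_get_of_le (a := ⟨i, by omega⟩) (b := ⟨j, hj⟩) (by simp; omega)
    simp only [List.get_eq_getElem] at this
    simp [hq ▸ this]
  rw [h1, List.length_take]
  omega

lemma sorted_lt_count {l : List ℝ} (hl : l.Pairwise (· ≤ ·)) {j : ℕ} (hj : j < l.length)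
    {q : ℝ} (hq : l[j] = q) :
    l.countP (fun x => decide (x < q)) ≤ j := by
  conv_lhs => rw [← List.take_append_drop j l]
  rw [List.countP_append]
  have h2 : (l.drop j).countP (fun x => decide (x < q)) = 0 := by
    rw [List.countP_eq_zero]
    intro a ha
    obtain ⟨i, hi, rfl⟩ := List.mem_iff_getElem.1 ha
    rw [List.length_drop] at hi
    rw [List.getElem_drop]
    have := hl.rel_get_of_le (a := ⟨j, hj⟩) (b := ⟨j + i, by omega⟩) (by simp)
    simp only [List.get_eq_getElem] at this
    simp only [decide_eq_true_eq, not_lt]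
    exact hq ▸ this
  have h3 := (l.take j).countP_le_length (p := fun x => decide (x < q))
  rw [List.length_take] at h3
  omega

lemma sorted_gt_count {l : List ℝ} (hl : l.Pairwise (· ≤ ·)) {j : ℕ} (hj : j < l.length)
    {q : ℝ} (hq : l[j] = q) :
    l.countP (fun x => decide (q < x)) ≤ l.length - (j + 1) := by
  conv_lhs => rw [← List.take_append_drop (j+1) l]
  rw [List.countP_append]
  have h2 : (l.take (j+1)).countP (fun x => decide (q < x)) = 0 := by
    rw [List.countP_eq_zero]
    intro a ha
    obtain ⟨i, hi, rfl⟩ := List.mem_iff_getElem.1 ha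
    rw [List.length_take] at hi
    rw [List.getElem_take]
    have := hl.rel_get_of_le (a := ⟨i, by omega⟩) (b := ⟨j, hj⟩) (by simp; omega)
    simp only [List.get_eq_getElem] at this
    simp only [decide_eq_true_eq, not_lt]
    exact hq ▸ this
  have h3 := (l.drop (j+1)).countP_le_length (p := fun x => decide (q < x))
  rw [List.length_drop] at h3
  omega

/-! ### `msScore` closed form and measurability -/

noncomputable def msTerm (H T : ℕ) (L U : (Fin (T + 1) → ℝ) → ℕ → ℕ → ℝ)
    (y : Fin (T + 1) → ℝ) (p : ℕ × ℕ) : ℝ :=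
  max (max (L y p.1 p.2 - y ⟨min (p.1 + p.2) T, Nat.lt_succ_of_le (Nat.min_le_right _ _)⟩) 0)
      (max (y ⟨min (p.1 + p.2) T, Nat.lt_succ_of_le (Nat.min_le_right _ _)⟩ - U y p.1 p.2) 0)

lemma msScore_eq (H T : ℕ) (L U : (Fin (T + 1) → ℝ) → ℕ → ℕ → ℝ) (y : Fin (T + 1) → ℝ) :
    msScore H T L U y =
      ((Finset.Icc 1 T ×ˢ Finset.Icc 1 H).filter (fun p => p.1 + p.2 ≤ T)).fold max 0
        (msTerm H T L U y) := by
  classical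
  set F := (Finset.Icc 1 T ×ˢ Finset.Icc 1 H).filter (fun p => p.1 + p.2 ≤ T) with hF
  set M := F.fold max 0 (msTerm H T L U y) with hMdef
  have hM0 : (0:ℝ) ≤ M := (Finset.le_fold_max 0).2 (Or.inl le_rfl)
  have hterm : ∀ t τ : ℕ, t ∈ Finset.Icc 1 T → τ ∈ Finset.Icc 1 H → t + τ ≤ T →
      msTerm H T L U y (t, τ) ≤ M := by
    intro t τ ht hτ hle
    exact (Finset.le_fold_max _).2 (Or.inr ⟨(t, τ), Finset.mem_filter.2
      ⟨Finset.mem_product.2 ⟨ht, hτ⟩, hle⟩, le_rfl⟩)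
  set g3 : ℕ → ℕ → ℝ := fun t τ => ⨆ _ : t + τ ≤ T, msTerm H T L U y (t, τ) with hg3def
  set g2 : ℕ → ℕ → ℝ := fun t τ => ⨆ _ : τ ∈ Finset.Icc 1 H, g3 t τ with hg2def
  set g1 : ℕ → ℝ := fun t => ⨆ τ, g2 t τ with hg1def
  set g0 : ℕ → ℝ := fun t => ⨆ _ : t ∈ Finset.Icc 1 T, g1 t with hg0def
  have hscore : msScore H T L U y = ⨆ t, g0 t := rfl
  have hg2 : ∀ t, t ∈ Finset.Icc 1 T → ∀ τ, g2 t τ ≤ M := by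
    intro t ht τ
    by_cases hτ : τ ∈ Finset.Icc 1 H
    · have h2 : g2 t τ = g3 t τ := by
        haveI : Nonempty (τ ∈ Finset.Icc 1 H) := ⟨hτ⟩
        exact ciSup_const
      rw [h2]
      by_cases hle : t + τ ≤ T
      · have h3 : g3 t τ = msTerm H T L U y (t, τ) := by
          haveI : Nonempty (t + τ ≤ T) := ⟨hle⟩
          exact ciSup_const
        rw [h3]; exact hterm t τ ht hτ hle
      · have h3 : g3 t τ = 0 := by
          haveI : IsEmpty (t + τ ≤ T) := ⟨fun h => hle h⟩
          exact Real.iSup_of_isEmpty _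
        rw [h3]; exact hM0
    · have h2 : g2 t τ = 0 := by
        haveI : IsEmpty (τ ∈ Finset.Icc 1 H) := ⟨fun h => hτ h⟩
        exact Real.iSup_of_isEmpty _
      rw [h2]; exact hM0
  have hg1 : ∀ t, t ∈ Finset.Icc 1 T → g1 t ≤ M := fun t ht =>
    Real.iSup_le (hg2 t ht) hM0
  have hg0 : ∀ t, g0 t ≤ M := by
    intro t
    by_cases ht : t ∈ Finset.Icc 1 T
    · exact Real.iSup_le (fun _ => hg1 t ht) hM0
    · have h0 : g0 t = 0 := by
        haveI : IsEmpty (t ∈ Finset.Icc 1 T) := ⟨fun h => ht h⟩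
        exact Real.iSup_of_isEmpty _
      rw [h0]; exact hM0
  have hbdd0 : BddAbove (Set.range g0) := ⟨M, by rintro _ ⟨t, rfl⟩; exact hg0 t⟩
  have h0le : (0:ℝ) ≤ msScore H T L U y := by
    rw [hscore]
    have h0 : g0 0 = 0 := by
      haveI : IsEmpty ((0:ℕ) ∈ Finset.Icc 1 T) := ⟨fun h => by simp at h⟩
      exact Real.iSup_of_isEmpty _
    calc (0:ℝ) = g0 0 := h0.symm
    _ ≤ ⨆ t, g0 t := le_ciSup hbdd0 0
  apply le_antisymm
  · rw [hscore]
    apply Real.iSup_le _ hM0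
    exact hg0
  · rw [hMdef]
    refine (Finset.fold_max_le _).2 ⟨h0le, ?_⟩
    rintro ⟨t, τ⟩ hp
    obtain ⟨hmem, hle⟩ := Finset.mem_filter.1 hp
    obtain ⟨ht, hτ⟩ := Finset.mem_product.1 hmem
    have e3 : g3 t τ = msTerm H T L U y (t, τ) := by
      haveI : Nonempty (t + τ ≤ T) := ⟨hle⟩
      exact ciSup_const
    have e2 : g2 t τ = g3 t τ := by
      haveI : Nonempty (τ ∈ Finset.Icc 1 H) := ⟨hτ⟩
      exact ciSup_const
    have hbdd2 : BddAbove (Set.range (g2 t)) := ⟨M, by rintro _ ⟨τ', rfl⟩; exact hg2 t ht τ'⟩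
    have e1 : g2 t τ ≤ g1 t := le_ciSup hbdd2 τ
    have e0 : g0 t = g1 t := by
      haveI : Nonempty (t ∈ Finset.Icc 1 T) := ⟨ht⟩
      exact ciSup_const
    calc msTerm H T L U y (t, τ) = g2 t τ := by rw [e2, e3]
    _ ≤ g1 t := e1
    _ = g0 t := e0.symm
    _ ≤ ⨆ t, g0 t := le_ciSup hbdd0 t
    _ = msScore H T L U y := hscore.symm

lemma measurable_msTerm (H T : ℕ) (L U : (Fin (T + 1) → ℝ) → ℕ → ℕ → ℝ)
    (hL : Measurable L) (hU : Measurable U) (p : ℕ × ℕ) :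
    Measurable (fun y => msTerm H T L U y p) := by
  have hLp : Measurable (fun y => L y p.1 p.2) :=
    (measurable_pi_apply p.2).comp ((measurable_pi_apply p.1).comp hL)
  have hUp : Measurable (fun y => U y p.1 p.2) :=
    (measurable_pi_apply p.2).comp ((measurable_pi_apply p.1).comp hU)
  have hy : Measurable (fun y : Fin (T+1) → ℝ =>
      y ⟨min (p.1 + p.2) T, Nat.lt_succ_of_le (Nat.min_le_right _ _)⟩) :=
    measurable_pi_apply _
  exact ((hLp.sub hy).max measurable_const).max ((hy.sub hUp).max measurable_const)

lemma measurable_msScore (H T : ℕ) (L U : (Fin (T + 1) → ℝ) → ℕ → ℕ → ℝ)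
    (hL : Measurable L) (hU : Measurable U) :
    Measurable (msScore H T L U) := by
  have h : msScore H T L U = fun y =>
      ((Finset.Icc 1 T ×ˢ Finset.Icc 1 H).filter (fun p => p.1 + p.2 ≤ T)).fold max 0
        (msTerm H T L U y) := funext (msScore_eq H T L U)
  rw [h]
  generalize (Finset.Icc 1 T ×ˢ Finset.Icc 1 H).filter (fun p => p.1 + p.2 ≤ T) = F
  induction F using Finset.induction_on with
  | empty => simp only [Finset.fold_empty]; exact measurable_const
  | @insert a s ha ih =>
    simp only [Finset.fold_insert ha]
    exact (measurable_msTerm H T L U hL hU a).max ih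

/-! ### Counting lemmas for the conformal rank argument -/

open Finset in
lemma badcount_le (n : ℕ) (e : Fin (n+1) → ℝ) (k : ℕ) (hk1 : 1 ≤ k) (hk : k ≤ n + 1) :
    (univ.filter (fun j : Fin (n+1) =>
      k ≤ (univ.filter (fun i => i ≠ j ∧ e i < e j)).card)).card ≤ n + 1 - k := by
  classical
  set l := (List.ofFn e).insertionSort (· ≤ ·) with hldef
  have hlen : l.length = n + 1 := by rw [hldef, List.length_insertionSort, List.length_ofFn]
  have hsort : l.Pairwise (· ≤ ·) := List.pairwise_insertionSort _ _
  have hperm : l.Perm (List.ofFn e) := List.perm_insertionSort _ _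
  have hkl : k - 1 < l.length := by omega
  set m := l[k-1] with hm
  have stepA : ∀ j : Fin (n+1), k ≤ (univ.filter (fun i => i ≠ j ∧ e i < e j)).card → m < e j := by
    intro j hj
    by_contra hle
    push_neg at hle
    have hsub : (univ.filter (fun i => i ≠ j ∧ e i < e j)) ⊆ univ.filter (fun i => e i < m) := by
      intro i hi
      simp only [mem_filter, mem_univ, true_and] at hi ⊢
      exact lt_of_lt_of_le hi.2 hle
    have hcard : (univ.filter (fun i : Fin (n+1) => e i < m)).card ≤ k - 1 := by
      rw [← countP_ofFn' e (fun x => x < m)]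
      calc (List.ofFn e).countP (fun x => decide (x < m)) = l.countP _ :=
        (hperm.countP_eq _).symm
      _ ≤ k - 1 := sorted_lt_count hsort hkl rfl
    have := (Finset.card_le_card hsub).trans hcard
    omega
  have stepB : (univ.filter (fun j : Fin (n+1) => m < e j)).card ≤ n + 1 - k := by
    rw [← countP_ofFn' e (fun x => m < x)]
    calc (List.ofFn e).countP (fun x => decide (m < x)) = l.countP _ := (hperm.countP_eq _).symm
    _ ≤ l.length - (k - 1 + 1) := sorted_gt_count hsort hkl rfl
    _ = n + 1 - k := by omega
  calc (univ.filter (fun j : Fin (n+1) =>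
      k ≤ (univ.filter (fun i => i ≠ j ∧ e i < e j)).card)).card
      ≤ (univ.filter (fun j : Fin (n+1) => m < e j)).card := by
        apply Finset.card_le_card
        intro j hj
        simp only [mem_filter, mem_univ, true_and] at hj ⊢
        exact stepA j hj
  _ ≤ n + 1 - k := stepB

open Finset in
lemma quantile_lt_badcount (n : ℕ) (e : Fin (n+1) → ℝ) (k : ℕ) (hk1 : 1 ≤ k) (hkn : k ≤ n)
    (hq : ((List.ofFn (fun i : Fin n => e i.castSucc)).insertionSort (· ≤ ·)).getD (k-1) 0
      < e (Fin.last n)) :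
    k ≤ (univ.filter (fun i : Fin (n+1) => i ≠ Fin.last n ∧ e i < e (Fin.last n))).card := by
  classical
  set l := (List.ofFn (fun i : Fin n => e i.castSucc)).insertionSort (· ≤ ·) with hldef
  have hlen : l.length = n := by rw [hldef, List.length_insertionSort, List.length_ofFn]
  have hsort : l.Pairwise (· ≤ ·) := List.pairwise_insertionSort _ _
  have hperm : l.Perm (List.ofFn (fun i : Fin n => e i.castSucc)) := List.perm_insertionSort _ _
  have hkl : k - 1 < l.length := by omega
  set q := l.getD (k-1) 0 with hqdef
  have hqe : l[k-1] = q := by rw [hqdef, List.getD_eq_getElem l 0 hkl]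
  have hcount : k ≤ (univ.filter (fun i : Fin n => e i.castSucc ≤ q)).card := by
    rw [← countP_ofFn' (fun i : Fin n => e i.castSucc) (fun x => x ≤ q)]
    calc k = k - 1 + 1 := by omega
    _ ≤ l.countP (fun x => decide (x ≤ q)) := sorted_le_count hsort hkl hqe
    _ = _ := hperm.countP_eq _
  calc k ≤ (univ.filter (fun i : Fin n => e i.castSucc ≤ q)).card := hcount
  _ ≤ (univ.filter (fun i : Fin (n+1) => i ≠ Fin.last n ∧ e i < e (Fin.last n))).card := by
    apply Finset.card_le_card_of_injOn (fun i => i.castSucc)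
    · intro i hi
      simp only [mem_filter, mem_univ, true_and, Finset.mem_coe] at hi ⊢
      exact ⟨(Fin.castSucc_lt_last i).ne, lt_of_le_of_lt hi hq⟩
    · intro a _ b _ hab
      exact Fin.castSucc_injective _ hab

/-! ### The probabilistic core -/

open Finset in
lemma measurable_badSet (n k : ℕ) (j : Fin (n+1)) :
    MeasurableSet {e : Fin (n+1) → ℝ |
      k ≤ (univ.filter (fun i => i ≠ j ∧ e i < e j)).card} := by
  classical
  have hcard : Measurable (fun e : Fin (n+1) → ℝ =>
      ((univ.filter (fun i => i ≠ j ∧ e i < e j)).card : ℕ)) := by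
    have h : (fun e : Fin (n+1) → ℝ => (univ.filter (fun i => i ≠ j ∧ e i < e j)).card)
        = fun e => ∑ i, if i ≠ j ∧ e i < e j then 1 else 0 := by
      funext e; rw [Finset.card_filter]
    rw [h]
    apply Finset.measurable_sum
    intro i _
    apply Measurable.ite _ measurable_const measurable_const
    have h2 : {e : Fin (n+1) → ℝ | i ≠ j ∧ e i < e j}
        = {e : Fin (n+1) → ℝ | i ≠ j} ∩ {e | e i < e j} := rfl
    rw [h2]
    exact (MeasurableSet.const _).inter
      (measurableSet_lt (measurable_pi_apply i) (measurable_pi_apply j))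
  exact hcard (measurableSet_Ici (a := k))

open Finset in
lemma conformal_core {Ω : Type*} [MeasurableSpace Ω] (μ : Measure Ω) [IsProbabilityMeasure μ]
    (n k : ℕ) (hk1 : 1 ≤ k) (hk : k ≤ n + 1)
    (X : Ω → Fin (n+1) → ℝ) (hX : Measurable X)
    (hexch : ∀ σ : Equiv.Perm (Fin (n+1)),
      Measure.map (fun ω i => X ω (σ i)) μ = Measure.map X μ) :
    μ {ω | k ≤ (univ.filter
        (fun i => i ≠ Fin.last n ∧ X ω i < X ω (Fin.last n))).card}
      ≤ ((n + 1 - k : ℕ) : ENNReal) / ((n + 1 : ℕ) : ENNReal) := by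
  classical
  set E : Fin (n+1) → Set (Fin (n+1) → ℝ) := fun j =>
    {e | k ≤ (univ.filter (fun i => i ≠ j ∧ e i < e j)).card} with hEdef
  have hE : ∀ j, MeasurableSet (E j) := fun j => measurable_badSet n k j
  set A : Fin (n+1) → Set Ω := fun j => X ⁻¹' (E j) with hAdef
  have hA : ∀ j, MeasurableSet (A j) := fun j => hX (hE j)
  have hsame : ∀ j : Fin (n+1), μ (A j) = μ (A (Fin.last n)) := by
    intro j
    set σ := Equiv.swap j (Fin.last n) with hσ
    have hmeasσ : Measurable (fun e : Fin (n+1) → ℝ => e ∘ σ) :=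
      measurable_pi_lambda _ (fun i => measurable_pi_apply (σ i))
    have hpre : (fun e : Fin (n+1) → ℝ => e ∘ σ) ⁻¹' (E (Fin.last n)) = E j := by
      ext e
      simp only [Set.mem_preimage, hEdef, Set.mem_setOf_eq, Function.comp]
      have hcardeq : (univ.filter (fun i : Fin (n+1) =>
          i ≠ Fin.last n ∧ e (σ i) < e (σ (Fin.last n)))).card
          = (univ.filter (fun i : Fin (n+1) => i ≠ j ∧ e i < e j)).card := by
        apply Finset.card_bij' (fun i _ => σ i) (fun i _ => σ i)
        · intro i hi
          simp only [mem_filter, mem_univ, true_and] at hi ⊢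
          refine ⟨?_, ?_⟩
          · intro h
            apply hi.1
            have h4 : σ i = σ (Fin.last n) := by rw [h, hσ, Equiv.swap_apply_right]
            exact σ.injective h4
          · have h4 : σ (Fin.last n) = j := by rw [hσ, Equiv.swap_apply_right]
            rw [← h4]; exact hi.2
        · intro i hi
          simp only [mem_filter, mem_univ, true_and] at hi ⊢
          have h1 : σ (σ i) = i := Equiv.swap_apply_self _ _ _
          have h2 : σ (Fin.last n) = j := Equiv.swap_apply_right _ _
          rw [h1, h2]
          refine ⟨?_, hi.2⟩
          intro h
          apply hi.1
          have h3 := congrArg σ h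
          rw [h1, h2] at h3
          exact h3
        · intro i _; simp [hσ]
        · intro i _; simp [hσ]
      rw [hcardeq]
    have hm : μ (A j) = Measure.map X μ (E j) := (Measure.map_apply hX (hE j)).symm
    rw [hm, ← hpre, ← Measure.map_apply hmeasσ (hE (Fin.last n)),
      Measure.map_map hmeasσ hX]
    have hcomp : ((fun e : Fin (n+1) → ℝ => e ∘ σ) ∘ X) = fun ω i => X ω (σ i) := rfl
    rw [hcomp, hexch σ, Measure.map_apply hX (hE (Fin.last n))]
  have hptwise : ∀ ω, (∑ j : Fin (n+1), (A j).indicator (fun _ => (1:ENNReal)) ω)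
      ≤ ((n + 1 - k : ℕ) : ENNReal) := by
    intro ω
    have hsum : (∑ j : Fin (n+1), (A j).indicator (fun _ => (1:ENNReal)) ω)
        = ((univ.filter (fun j : Fin (n+1) => ω ∈ A j)).card : ENNReal) := by
      rw [Finset.card_filter]
      push_cast
      apply Finset.sum_congr rfl
      intro j _
      by_cases h : ω ∈ A j <;> simp [h, Set.indicator]
    rw [hsum]
    have hfe : (univ.filter (fun j : Fin (n+1) => ω ∈ A j))
        = univ.filter (fun j : Fin (n+1) =>
            k ≤ (univ.filter (fun i => i ≠ j ∧ X ω i < X ω j)).card) := by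
      apply Finset.filter_congr
      intro j _
      simp [hAdef, hEdef]
    rw [hfe]
    have hb := badcount_le n (X ω) k hk1 hk
    exact Nat.cast_le.2 hb
  have hsum : ∑ j : Fin (n+1), μ (A j) ≤ ((n + 1 - k : ℕ) : ENNReal) := by
    have h1 : ∀ j : Fin (n+1), μ (A j) = ∫⁻ ω, (A j).indicator (fun _ => (1:ENNReal)) ω ∂μ :=
      fun j => (lintegral_indicator_one (hA j)).symm
    calc ∑ j : Fin (n+1), μ (A j)
        = ∑ j : Fin (n+1), ∫⁻ ω, (A j).indicator (fun _ => (1:ENNReal)) ω ∂μ := by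
          exact Finset.sum_congr rfl (fun j _ => h1 j)
    _ = ∫⁻ ω, ∑ j : Fin (n+1), (A j).indicator (fun _ => (1:ENNReal)) ω ∂μ := by
          rw [lintegral_finset_sum]
          exact fun j _ => (measurable_const.indicator (hA j))
    _ ≤ ∫⁻ _, ((n + 1 - k : ℕ) : ENNReal) ∂μ := lintegral_mono hptwise
    _ = ((n + 1 - k : ℕ) : ENNReal) := by simp
  have hconst : ((n+1 : ℕ) : ENNReal) * μ (A (Fin.last n)) ≤ ((n + 1 - k : ℕ) : ENNReal) := by
    calc ((n+1 : ℕ) : ENNReal) * μ (A (Fin.last n))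
        = ∑ _j : Fin (n+1), μ (A (Fin.last n)) := by
          rw [Finset.sum_const, Finset.card_univ, Fintype.card_fin, nsmul_eq_mul]
    _ = ∑ j : Fin (n+1), μ (A j) := Finset.sum_congr rfl (fun j _ => (hsame j).symm)
    _ ≤ _ := hsum
  have hres : μ (A (Fin.last n)) ≤ ((n + 1 - k : ℕ) : ENNReal) / ((n + 1 : ℕ) : ENNReal) := by
    rw [ENNReal.le_div_iff_mul_le (Or.inl (by simp)) (Or.inl (by simp))]
    rw [mul_comm]
    exact hconst
  exact hres

theorem stmt15 {Ω : Type*} [MeasurableSpace Ω] (μ : Measure Ω) [IsProbabilityMeasure μ]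
    (n H T : ℕ) (hn : 0 < n) (hH : 1 ≤ H) (hT : 1 ≤ T)
    (α : ℝ) (hα : α ∈ Set.Ioo (0 : ℝ) 1)
    (Y : Ω → Fin (n + 1) → (Fin (T + 1) → ℝ)) (hYmeas : Measurable Y)
    -- exchangeability of the n+1 trajectories
    (hexch : ∀ σ : Equiv.Perm (Fin (n + 1)),
      Measure.map (fun ω i => Y ω (σ i)) μ = Measure.map Y μ)
    -- the online rule: at time t it issues, for each horizon τ, the interval
    -- [L y t τ, U y t τ] forecasting time t + τ
    (L U : (Fin (T + 1) → ℝ) → ℕ → ℕ → ℝ)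
    (hLmeas : Measurable L) (hUmeas : Measurable U)
    -- the intervals issued at time t depend only on the past values y_0, ..., y_t
    (hpast : ∀ (y y' : Fin (T + 1) → ℝ) (t τ : ℕ),
      (∀ s : Fin (T + 1), (s : ℕ) ≤ t → y s = y' s) →
        L y t τ = L y' t τ ∧ U y t τ = U y' t τ) :
    ENNReal.ofReal (1 - α) ≤
      μ {ω | ∀ t τ : ℕ, 1 ≤ t → t ≤ T → 1 ≤ τ → τ ≤ H → ∀ h : t + τ ≤ T,
        (Y ω (Fin.last n) ⟨t + τ, Nat.lt_succ_of_le h⟩ : EReal) ∈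
          Set.Icc
            ((L (Y ω (Fin.last n)) t τ : EReal) -
              kthSmallestE
                (List.ofFn (fun i : Fin n => msScore H T L U (Y ω i.castSucc)))
                ⌈(1 - α) * (n + 1)⌉₊)
            ((U (Y ω (Fin.last n)) t τ : EReal) +
              kthSmallestE
                (List.ofFn (fun i : Fin n => msScore H T L U (Y ω i.castSucc)))
                ⌈(1 - α) * (n + 1)⌉₊)} := by
  classical
  obtain ⟨hα0, hα1⟩ := hα
  set k := ⌈(1 - α) * ((n : ℝ) + 1)⌉₊ with hkdef
  have hk1 : 1 ≤ k := by
    rw [hkdef]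
    have hpos : (0:ℝ) < (1 - α) * ((n : ℝ) + 1) := by
      apply mul_pos (by linarith)
      positivity
    exact Nat.ceil_pos.2 hpos
  by_cases hkn : k ≤ n
  case neg =>
    -- k ≥ n + 1 : the quantile is ⊤ and coverage is trivial
    push_neg at hkn
    have hall : ∀ ω, ω ∈ {ω : Ω | ∀ t τ : ℕ, 1 ≤ t → t ≤ T → 1 ≤ τ → τ ≤ H → ∀ h : t + τ ≤ T,
        (Y ω (Fin.last n) ⟨t + τ, Nat.lt_succ_of_le h⟩ : EReal) ∈
          Set.Icc
            ((L (Y ω (Fin.last n)) t τ : EReal) -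
              kthSmallestE
                (List.ofFn (fun i : Fin n => msScore H T L U (Y ω i.castSucc)))
                ⌈(1 - α) * (n + 1)⌉₊)
            ((U (Y ω (Fin.last n)) t τ : EReal) +
              kthSmallestE
                (List.ofFn (fun i : Fin n => msScore H T L U (Y ω i.castSucc)))
                ⌈(1 - α) * (n + 1)⌉₊)} := by
      intro ω t τ ht hT' hτ hH' h
      have htop : kthSmallestE
          (List.ofFn (fun i : Fin n => msScore H T L U (Y ω i.castSucc)))
          ⌈(1 - α) * ((n:ℝ) + 1)⌉₊ = ⊤ := by
        unfold kthSmallestE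
        apply List.getD_eq_default
        rw [List.length_map, List.length_insertionSort, List.length_ofFn]
        omega
      rw [htop]
      constructor
      · rw [EReal.sub_top]; exact bot_le
      · rw [EReal.coe_add_top]; exact le_top
    have huniv : {ω : Ω | ∀ t τ : ℕ, 1 ≤ t → t ≤ T → 1 ≤ τ → τ ≤ H → ∀ h : t + τ ≤ T,
        (Y ω (Fin.last n) ⟨t + τ, Nat.lt_succ_of_le h⟩ : EReal) ∈
          Set.Icc
            ((L (Y ω (Fin.last n)) t τ : EReal) -
              kthSmallestE
                (List.ofFn (fun i : Fin n => msScore H T L U (Y ω i.castSucc)))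
                ⌈(1 - α) * (n + 1)⌉₊)
            ((U (Y ω (Fin.last n)) t τ : EReal) +
              kthSmallestE
                (List.ofFn (fun i : Fin n => msScore H T L U (Y ω i.castSucc)))
                ⌈(1 - α) * (n + 1)⌉₊)} = Set.univ :=
      Set.eq_univ_of_forall hall
    rw [huniv, measure_univ]
    exact ENNReal.ofReal_le_one.2 (by linarith)
  case pos =>
    set X : Ω → Fin (n+1) → ℝ := fun ω i => msScore H T L U (Y ω i) with hXdef
    have hXmeas : Measurable X := measurable_pi_lambda _ (fun i =>
      (measurable_msScore H T L U hLmeas hUmeas).comp ((measurable_pi_apply i).comp hYmeas))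
    have hΦ : Measurable (fun Ys : Fin (n+1) → (Fin (T+1) → ℝ) =>
        fun i => msScore H T L U (Ys i)) :=
      measurable_pi_lambda _ (fun i =>
        (measurable_msScore H T L U hLmeas hUmeas).comp (measurable_pi_apply i))
    have hXexch : ∀ σ : Equiv.Perm (Fin (n+1)),
        Measure.map (fun ω i => X ω (σ i)) μ = Measure.map X μ := by
      intro σ
      have hYσ : Measurable (fun ω i => Y ω (σ i)) :=
        measurable_pi_lambda _ (fun i => (measurable_pi_apply (σ i)).comp hYmeas)
      have e1 : (fun ω i => X ω (σ i))
          = (fun Ys : Fin (n+1) → (Fin (T+1) → ℝ) => fun i => msScore H T L U (Ys i))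
            ∘ (fun ω i => Y ω (σ i)) := rfl
      have e2 : X = (fun Ys : Fin (n+1) → (Fin (T+1) → ℝ) =>
          fun i => msScore H T L U (Ys i)) ∘ Y := rfl
      rw [e1, e2, ← Measure.map_map hΦ hYσ, ← Measure.map_map hΦ hYmeas, hexch σ]
    set q : Ω → ℝ := fun ω =>
      ((List.ofFn (fun i : Fin n => X ω i.castSucc)).insertionSort (· ≤ ·)).getD (k-1) 0
      with hqdef
    -- the good event
    have hsubset : {ω : Ω | X ω (Fin.last n) ≤ q ω} ⊆
        {ω : Ω | ∀ t τ : ℕ, 1 ≤ t → t ≤ T → 1 ≤ τ → τ ≤ H → ∀ h : t + τ ≤ T,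
        (Y ω (Fin.last n) ⟨t + τ, Nat.lt_succ_of_le h⟩ : EReal) ∈
          Set.Icc
            ((L (Y ω (Fin.last n)) t τ : EReal) -
              kthSmallestE
                (List.ofFn (fun i : Fin n => msScore H T L U (Y ω i.castSucc)))
                ⌈(1 - α) * (n + 1)⌉₊)
            ((U (Y ω (Fin.last n)) t τ : EReal) +
              kthSmallestE
                (List.ofFn (fun i : Fin n => msScore H T L U (Y ω i.castSucc)))
                ⌈(1 - α) * (n + 1)⌉₊)} := by
      intro ω hω t τ ht hT' hτ hH' h
      have hω' : X ω (Fin.last n) ≤ q ω := hω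
      have hkth : kthSmallestE
          (List.ofFn (fun i : Fin n => msScore H T L U (Y ω i.castSucc)))
          ⌈(1 - α) * ((n:ℝ) + 1)⌉₊ = ((q ω : ℝ) : EReal) := by
        unfold kthSmallestE
        have hlen : ((List.ofFn (fun i : Fin n => msScore H T L U (Y ω i.castSucc))).insertionSort
            (· ≤ ·)).length = n := by
          rw [List.length_insertionSort, List.length_ofFn]
        have hidx : ⌈(1 - α) * ((n:ℝ) + 1)⌉₊ - 1 <
            (((List.ofFn (fun i : Fin n => msScore H T L U (Y ω i.castSucc))).insertionSort
              (· ≤ ·)).map (fun x : ℝ => (x : EReal))).length := by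
          rw [List.length_map, hlen]
          omega
        rw [List.getD_eq_getElem _ ⊤ hidx, List.getElem_map]
        congr 1
        have hidx2 : k - 1 <
            ((List.ofFn (fun i : Fin n => X ω i.castSucc)).insertionSort (· ≤ ·)).length := by
          rw [List.length_insertionSort, List.length_ofFn]; omega
        have hqω : q ω = ((List.ofFn (fun i : Fin n => X ω i.castSucc)).insertionSort
            (· ≤ ·))[k-1] := List.getD_eq_getElem _ 0 hidx2
        rw [hqω]
      rw [hkth]
      -- bound the term by the score
      have hterm_le : msTerm H T L U (Y ω (Fin.last n)) (t, τ) ≤ X ω (Fin.last n) := by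
        rw [hXdef]
        simp only
        rw [msScore_eq]
        exact (Finset.le_fold_max _).2 (Or.inr ⟨(t, τ), Finset.mem_filter.2
          ⟨Finset.mem_product.2 ⟨Finset.mem_Icc.2 ⟨ht, hT'⟩, Finset.mem_Icc.2 ⟨hτ, hH'⟩⟩, h⟩,
          le_rfl⟩)
      have hq' : msTerm H T L U (Y ω (Fin.last n)) (t, τ) ≤ q ω := hterm_le.trans hω'
      have hidxeq : (⟨min (t + τ) T, Nat.lt_succ_of_le (Nat.min_le_right _ _)⟩ : Fin (T+1))
          = ⟨t + τ, Nat.lt_succ_of_le h⟩ := Fin.ext (min_eq_left h)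
      unfold msTerm at hq'
      simp only at hq'
      rw [hidxeq] at hq'
      have hL' : L (Y ω (Fin.last n)) t τ - Y ω (Fin.last n) ⟨t + τ, Nat.lt_succ_of_le h⟩
          ≤ q ω := le_trans (le_max_left _ _) (le_trans (le_max_left _ _) hq')
      have hU' : Y ω (Fin.last n) ⟨t + τ, Nat.lt_succ_of_le h⟩ - U (Y ω (Fin.last n)) t τ
          ≤ q ω := le_trans (le_max_left _ _) (le_trans (le_max_right _ _) hq')
      constructor
      · rw [← EReal.coe_sub]
        exact EReal.coe_le_coe_iff.2 (by linarith)
      · rw [← EReal.coe_add]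
        exact EReal.coe_le_coe_iff.2 (by linarith)
    -- the complement bad event
    have hbad : {ω : Ω | q ω < X ω (Fin.last n)} ⊆
        {ω : Ω | k ≤ (Finset.univ.filter
          (fun i => i ≠ Fin.last n ∧ X ω i < X ω (Fin.last n))).card} := by
      intro ω hω
      exact quantile_lt_badcount n (X ω) k hk1 hkn hω
    have hcore := conformal_core μ n k hk1 (by omega) X hXmeas hXexch
    have harith : ((n + 1 - k : ℕ) : ENNReal) / ((n + 1 : ℕ) : ENNReal)
        ≤ ENNReal.ofReal α := by
      apply ENNReal.div_le_of_le_mul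
      rw [← ENNReal.ofReal_natCast (n + 1 - k), ← ENNReal.ofReal_natCast (n + 1),
        ← ENNReal.ofReal_mul hα0.le]
      apply ENNReal.ofReal_le_ofReal
      have hceil : (1 - α) * ((n : ℝ) + 1) ≤ (k : ℝ) := Nat.le_ceil _
      have hcast : ((n + 1 - k : ℕ) : ℝ) = ((n : ℝ) + 1) - (k : ℝ) := by
        rw [Nat.cast_sub (by omega)]
        push_cast
        ring
      rw [hcast]
      push_cast
      nlinarith
    have hGc : μ {ω : Ω | q ω < X ω (Fin.last n)} ≤ ENNReal.ofReal α :=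
      le_trans (measure_mono hbad) (hcore.trans harith)
    have hcover : (Set.univ : Set Ω) ⊆
        {ω : Ω | X ω (Fin.last n) ≤ q ω} ∪ {ω : Ω | q ω < X ω (Fin.last n)} := by
      intro ω _
      rcases le_or_gt (X ω (Fin.last n)) (q ω) with h | h
      · exact Or.inl h
      · exact Or.inr h
    have hone : (1 : ENNReal) ≤ μ {ω : Ω | X ω (Fin.last n) ≤ q ω} + ENNReal.ofReal α := by
      calc (1 : ENNReal) = μ Set.univ := (measure_univ).symm
      _ ≤ μ ({ω : Ω | X ω (Fin.last n) ≤ q ω} ∪ {ω : Ω | q ω < X ω (Fin.last n)}) :=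
        measure_mono hcover
      _ ≤ μ {ω : Ω | X ω (Fin.last n) ≤ q ω} + μ {ω : Ω | q ω < X ω (Fin.last n)} :=
        measure_union_le _ _
      _ ≤ _ := add_le_add_right hGc _
    have hfinal : ENNReal.ofReal (1 - α) ≤ μ {ω : Ω | X ω (Fin.last n) ≤ q ω} := by
      have h2 : ENNReal.ofReal (1 - α) + ENNReal.ofReal α = 1 := by
        rw [← ENNReal.ofReal_add (by linarith) hα0.le]
        norm_num
      have h3 : ENNReal.ofReal (1 - α) = 1 - ENNReal.ofReal α := by
        rw [← h2, ENNReal.add_sub_cancel_right ENNReal.ofReal_ne_top]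
      rw [h3]
      exact tsub_le_iff_right.2 hone
    exact le_trans hfinal (measure_mono hsubset)
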